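/- arXiv:2505.00722 — 3 statements merged into one kernel-verified Lean document; each statement's English description precedes it below -/
import Mathlib

section
/- Let (X, b) be the b-metric space on X = {0, 1, 1/2, 1/3, ...} with b(ξ,η) = 0 if ξ=η, 1 if ξ≠η ∈ {0,1}, |ξ−η| if ξ≠η ∈ {0} ∪ {1/(2m) : m ≥ 1}, and 4 otherwise, and let P(x,σ,q) = b(x,σ)/q be the induced generalized θ-parametric metric with θ(a,c)=a+c. Then the open ball B(1,2,1) = {0,1} is not an open set in (X,P,θ): for every r₀ > 0 and t₀ > 0, B(0,r₀,t₀) ⊄ B(1,2,1). -/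
open scoped Classical

/-- `X = {0, 1, 1/2, 1/3, ...}`. -/
def Xset : Set ℝ := {0} ∪ {x | ∃ n : ℕ, 1 ≤ n ∧ x = 1 / (n : ℝ)}

/-- The b-metric `b` on `X`. -/
noncomputable def bm (ξ η : ℝ) : ℝ :=
  if ξ = η then 0
  else if (ξ = 0 ∨ ξ = 1) ∧ (η = 0 ∨ η = 1) then 1
  else if (ξ = 0 ∨ ∃ m : ℕ, 1 ≤ m ∧ ξ = 1 / (2 * (m : ℝ))) ∧
          (η = 0 ∨ ∃ m : ℕ, 1 ≤ m ∧ η = 1 / (2 * (m : ℝ))) then |ξ - η|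
  else 4

/-- The induced generalized θ-parametric metric `P(x,σ,q) = b(x,σ)/q`. -/
noncomputable def Pm (x σ : ℝ) (q : ℝ) : ℝ := bm x σ / q

lemma one_ne_half (m : ℕ) (hm : 1 ≤ m) : (1:ℝ) ≠ 1 / (2 * (m : ℝ)) := by
  have hm' : (1:ℝ) ≤ m := by exact_mod_cast hm
  intro h
  rw [eq_div_iff (by positivity)] at h
  nlinarith

lemma bm_one_eq_four (y : ℝ) (h0 : y ≠ 0) (h1 : y ≠ 1) : bm 1 y = 4 := by
  unfold bm
  rw [if_neg (fun h => h1 h.symm), if_neg, if_neg]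
  · rintro ⟨h | ⟨m, hm, hmy⟩, _⟩
    · norm_num at h
    · exact one_ne_half m hm hmy
  · rintro ⟨_, h | h⟩
    · exact h0 h
    · exact h1 h

/-- The open ball `B(1,2,1)` equals `{0,1}` but is not an open set: for every `r₀ > 0`
and `t₀ > 0`, `B(0,r₀,t₀) ⊄ B(1,2,1)`. -/
theorem stmt13 :
    ({y ∈ Xset | Pm 1 y 1 < 2} = ({0, 1} : Set ℝ)) ∧
    (∀ r₀ > (0:ℝ), ∀ t₀ > (0:ℝ),
      ¬ ({y ∈ Xset | Pm 0 y t₀ < r₀} ⊆ {y ∈ Xset | Pm 1 y 1 < 2})) := by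
  constructor
  · ext y
    simp only [Set.mem_setOf_eq, Set.mem_sep_iff, Set.mem_insert_iff,
      Set.mem_singleton_iff]
    constructor
    · rintro ⟨hy, hP⟩
      by_contra h
      push_neg at h
      rw [Pm, bm_one_eq_four y h.1 h.2] at hP
      norm_num at hP
    · rintro (rfl | rfl)
      · refine ⟨Or.inl rfl, ?_⟩
        have : bm 1 0 = 1 := by
          unfold bm
          rw [if_neg (by norm_num), if_pos ⟨Or.inr rfl, Or.inl rfl⟩]
        rw [Pm, this]; norm_num
      · refine ⟨Or.inr ⟨1, le_refl 1, by norm_num⟩, ?_⟩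
        have : bm 1 1 = 0 := by unfold bm; rw [if_pos rfl]
        rw [Pm, this]; norm_num
  · intro r₀ hr t₀ ht hsub
    obtain ⟨N, hN⟩ := exists_nat_one_div_lt (mul_pos hr ht)
    set M : ℕ := N + 1 with hM
    set y : ℝ := 1 / (2 * (M : ℝ)) with hy
    have hMpos : (1:ℝ) ≤ (M : ℝ) := by exact_mod_cast Nat.succ_le_succ (Nat.zero_le N)
    have hypos : 0 < y := by positivity
    have hylt : y < r₀ * t₀ := by
      have h1 : y < 1 / (M : ℝ) := by
        rw [hy, div_lt_div_iff₀ (by positivity) (by positivity)]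
        nlinarith
      have h2 : (1:ℝ) / (M : ℝ) = 1 / ((N : ℝ) + 1) := by norm_num [hM]
      linarith [h2 ▸ h1, hN]
    have hyX : y ∈ Xset := by
      refine Or.inr ⟨2 * M, by omega, ?_⟩
      rw [hy]; push_cast; ring_nf
    have hy1 : y ≠ 1 := fun h => one_ne_half M (by omega) (hy.symm.trans h).symm
    have hb0 : bm 0 y = y := by
      unfold bm
      rw [if_neg (fun h => hypos.ne h), if_neg, if_pos, abs_of_nonpos (by linarith)]
      · ring
      · exact ⟨Or.inl rfl, Or.inr ⟨M, by omega, hy⟩⟩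
      · rintro ⟨_, h | h⟩
        · exact hypos.ne' h
        · exact hy1 h
    have hmem : y ∈ {y ∈ Xset | Pm 0 y t₀ < r₀} := by
      refine ⟨hyX, ?_⟩
      rw [Pm, hb0, div_lt_iff₀ ht]
      exact hylt
    have := hsub hmem
    rw [Set.mem_sep_iff, Pm, bm_one_eq_four y hypos.ne' hy1] at this
    exact absurd this.2 (by norm_num)
end

section
/- In the generalized θ-parametric metric space (X, P, θ) with X = {0,1,1/2,1/3,...}, P(x,σ,q) = b(x,σ)/q for the b-metric b given by b(ξ,η)=0 if ξ=η, 1 if ξ≠η∈{0,1}, |ξ−η| if ξ≠η∈{0}∪{1/(2m)}, 4 otherwise, the sequence sₙ = 1/(2n) converges to 0, but lim_{n→∞} P(sₙ, 1, p) = 4/p ≠ 1/p = P(0, 1, p) for all p > 0; hence the map P is not sequentially continuous in its variables. -/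
open Filter
open scoped Classical

lemma sn_pos (n : ℕ) : (0:ℝ) < 1 / (2 * ((n : ℝ) + 1)) := by positivity

lemma sn_le_half (n : ℕ) : (1:ℝ) / (2 * ((n : ℝ) + 1)) ≤ 1 / 2 := by
  apply one_div_le_one_div_of_le (by norm_num)
  nlinarith [Nat.cast_nonneg (α := ℝ) n]

lemma bm_sn_zero (n : ℕ) : bm (1 / (2 * ((n : ℝ) + 1))) 0 = 1 / (2 * ((n : ℝ) + 1)) := by
  have h0 := sn_pos n
  rw [bm]
  rw [if_neg (by linarith), if_neg, if_pos]
  · rw [sub_zero, abs_of_pos h0]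
  · constructor
    · right; exact ⟨n + 1, by simp, by push_cast; ring⟩
    · left; rfl
  · rintro ⟨h1 | h1, -⟩
    · linarith
    · have := sn_le_half n; linarith [h1 ▸ this]

lemma bm_sn_one (n : ℕ) : bm (1 / (2 * ((n : ℝ) + 1))) 1 = 4 := by
  have h0 := sn_pos n
  have hh := sn_le_half n
  have hne : (1:ℝ) / (2 * ((n : ℝ) + 1)) ≠ 1 := by intro h; rw [h] at hh; linarith
  rw [bm]
  rw [if_neg hne, if_neg, if_neg]
  · rintro ⟨-, h1 | ⟨m, hm, hm1⟩⟩
    · norm_num at h1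
    · have hm' : (1:ℝ) ≤ (m:ℝ) := by exact_mod_cast hm
      have : (1:ℝ) / (2 * (m:ℝ)) ≤ 1 / 2 := by
        apply one_div_le_one_div_of_le (by norm_num); linarith
      rw [← hm1] at this; linarith
  · rintro ⟨h1 | h1, -⟩
    · linarith
    · exact hne h1

/-- The sequence `sₙ = 1/(2n)` converges to `0`, but `P(sₙ,1,p) → 4/p ≠ 1/p = P(0,1,p)`
for every `p > 0`; hence `P` is not sequentially continuous in its variables. -/
theorem stmt14 :
    (∀ p > (0:ℝ),
      Tendsto (fun n : ℕ => Pm (1 / (2 * ((n : ℝ) + 1))) 0 p) atTop (nhds 0)) ∧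
    (∀ p > (0:ℝ),
      Tendsto (fun n : ℕ => Pm (1 / (2 * ((n : ℝ) + 1))) 1 p) atTop (nhds (4 / p)) ∧
      Pm 0 1 p = 1 / p ∧ (4:ℝ) / p ≠ 1 / p) := by
  constructor
  · intro p hp
    have : (fun n : ℕ => Pm (1 / (2 * ((n : ℝ) + 1))) 0 p)
        = fun n : ℕ => (1 / (2 * ((n : ℝ) + 1))) / p := by
      funext n; rw [Pm, bm_sn_zero]
    rw [this]
    have h1 : Tendsto (fun n : ℕ => (1 / (2 * ((n : ℝ) + 1)))) atTop (nhds 0) := by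
      simp only [one_div]
      apply Tendsto.inv_tendsto_atTop
      apply Tendsto.const_mul_atTop (by norm_num : (0:ℝ) < 2)
      exact tendsto_atTop_add_const_right _ 1 tendsto_natCast_atTop_atTop
    simpa using h1.div_const p
  · intro p hp
    refine ⟨?_, ?_, ?_⟩
    · have : (fun n : ℕ => Pm (1 / (2 * ((n : ℝ) + 1))) 1 p) = fun _ : ℕ => 4 / p := by
        funext n; rw [Pm, bm_sn_one]
      rw [this]; exact tendsto_const_nhds
    · rw [Pm, bm]
      rw [if_neg (by norm_num), if_pos ⟨Or.inl rfl, Or.inr rfl⟩]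
    · intro h
      rw [div_eq_div_iff hp.ne' hp.ne'] at h
      nlinarith
end

section
/- Let X = C[0,1] with sup-metric d_∞ and P(φ,ϕ,q) = d_∞(φ,ϕ)/q, a complete generalized θ-parametric metric space with θ(a,b)=a+b, f = ln, α = 0. Let 1 < η ≤ 2 and g : [0,1] × ℝ → ℝ continuous with |g(t,x₁) − g(t,x₂)| ≤ r·(Γ(η+1)/4)·|x₁ − x₂| for some r ∈ [0,1). Define H : X → X by H(Ξ)(t) = (1/Γ(η))∫₀ᵗ (t−s)^{η−1} g(s,Ξ(s)) ds + (2t/Γ(η))∫₀¹ (∫₀ˢ (s−q)^{η−1} g(q,Ξ(q)) dq) ds. Then for all Ξ, χ ∈ X, sup_{t∈[0,1]} |H(Ξ)(t) − H(χ)(t)| ≤ r·d_∞(Ξ,χ), i.e., P(H(Ξ), H(χ), l) ≤ r·P(Ξ,χ,l) for all l > 0, and consequently H has a unique fixed point in X. -/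
/-!
Both terms of `H Ξ - H χ` are Riemann–Liouville integrals of `g(·, Ξ(·)) - g(·, χ(·))`, which is
bounded by `r Γ(η+1)/4 · d(Ξ, χ)`. As `∫₀ᵗ (t - s)^{η-1} ds = t^η / η ≤ 1/η` and `η Γ(η) = Γ(η+1)`,
the difference at `t` is at most `(1 + 2t)/4 · r d(Ξ, χ) ≤ 3/4 · r d(Ξ, χ)`, so `H` is a contraction
of the complete space `C[0,1]` and Banach's theorem gives the unique fixed point.
-/

open MeasureTheory Set

/-- `X = C[0,1]` with the sup metric. -/
abbrev XC := C(Set.Icc (0:ℝ) 1, ℝ)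

/-- The Riemann–Liouville integral of order `η`, without the factor `1 / Γ(η)`. -/
noncomputable def rlIntegral (η : ℝ) (F : ℝ → ℝ) (t : ℝ) : ℝ :=
  ∫ s in (0:ℝ)..t, (t - s) ^ (η - 1) * F s

/-- The operator `H` of the theorem, acting on `F = g(·, Ξ(·))`. -/
noncomputable def fractionalBVPOperator (η : ℝ) (F : ℝ → ℝ) (t : ℝ) : ℝ :=
  1 / Real.Gamma η * rlIntegral η F t + 2 * t / Real.Gamma η * ∫ s in (0:ℝ)..1, rlIntegral η F s

section RiemannLiouville

variable {η : ℝ}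

lemma intervalIntegrable_sub_rpow_sub_one (hη : 0 < η) (t a b : ℝ) :
    IntervalIntegrable (fun s => (t - s) ^ (η - 1)) volume a b := by
  simpa using (intervalIntegral.intervalIntegrable_rpow' (a := t - a) (b := t - b)
    (r := η - 1) (by linarith)).comp_sub_left t

lemma integral_sub_rpow_sub_one (hη : 0 < η) (t : ℝ) :
    ∫ s in (0:ℝ)..t, (t - s) ^ (η - 1) = t ^ η / η := by
  rw [intervalIntegral.integral_comp_sub_left (fun x : ℝ => x ^ (η - 1)) t, sub_self, sub_zero,
    integral_rpow (Or.inl (by linarith)), sub_add_cancel, Real.zero_rpow hη.ne', sub_zero]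

lemma abs_rlIntegral_le {F : ℝ → ℝ} {K t : ℝ} (hη : 0 < η) (ht : 0 ≤ t)
    (hF : ∀ s ∈ Ioc 0 t, |F s| ≤ K) : |rlIntegral η F t| ≤ t ^ η / η * K := by
  rw [← integral_sub_rpow_sub_one hη, ← intervalIntegral.integral_mul_const, ← Real.norm_eq_abs,
    rlIntegral]
  refine intervalIntegral.norm_integral_le_of_norm_le ht (ae_of_all _ fun s hs => ?_)
    ((intervalIntegrable_sub_rpow_sub_one hη t 0 t).mul_const K)
  rw [Real.norm_eq_abs, abs_mul, abs_of_nonneg (Real.rpow_nonneg (sub_nonneg.2 hs.2) _)]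
  exact mul_le_mul_of_nonneg_left (hF s hs) (Real.rpow_nonneg (sub_nonneg.2 hs.2) _)

lemma abs_rlIntegral_le_div {F : ℝ → ℝ} {K t : ℝ} (hη : 0 < η) (hK : 0 ≤ K)
    (hF : ∀ s ∈ Icc 0 1, |F s| ≤ K) (ht : t ∈ Icc 0 1) : |rlIntegral η F t| ≤ K / η := by
  calc |rlIntegral η F t|
      ≤ t ^ η / η * K :=
        abs_rlIntegral_le hη ht.1 fun s hs => hF s ⟨hs.1.le, hs.2.trans ht.2⟩
    _ ≤ 1 / η * K := by gcongr; exact Real.rpow_le_one ht.1 ht.2 hη.le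
    _ = K / η := by ring

lemma rlIntegral_sub {F G : ℝ → ℝ} (hη : 0 < η) (hF : Continuous F) (hG : Continuous G)
    (t : ℝ) : rlIntegral η F t - rlIntegral η G t = rlIntegral η (F - G) t := by
  simp only [rlIntegral, Pi.sub_apply, mul_sub]
  exact (intervalIntegral.integral_sub
    ((intervalIntegrable_sub_rpow_sub_one hη t 0 t).mul_continuousOn hF.continuousOn)
    ((intervalIntegrable_sub_rpow_sub_one hη t 0 t).mul_continuousOn hG.continuousOn)).symm

lemma continuous_rlIntegral {F : ℝ → ℝ} (hη : 1 < η) (hF : Continuous F) :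
    Continuous (rlIntegral η F) := by
  have hpow : Continuous fun x : ℝ => x ^ (η - 1) :=
    continuous_iff_continuousAt.2 fun x =>
      Real.continuousAt_rpow_const x _ (Or.inr (by linarith))
  exact intervalIntegral.continuous_parametric_intervalIntegral_of_continuous
    (f := fun t s => (t - s) ^ (η - 1) * F s)
    ((hpow.comp (continuous_fst.sub continuous_snd)).mul (hF.comp continuous_snd))
    continuous_id

lemma integral_rlIntegral_sub {F G : ℝ → ℝ} (hη : 1 < η) (hF : Continuous F)
    (hG : Continuous G) :
    (∫ s in (0:ℝ)..1, rlIntegral η F s) - ∫ s in (0:ℝ)..1, rlIntegral η G s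
      = ∫ s in (0:ℝ)..1, rlIntegral η (F - G) s := by
  rw [← intervalIntegral.integral_sub ((continuous_rlIntegral hη hF).intervalIntegrable _ _)
    ((continuous_rlIntegral hη hG).intervalIntegrable _ _)]
  simp only [rlIntegral_sub (by linarith) hF hG]

lemma abs_fractionalBVPOperator_sub_le {F G : ℝ → ℝ} {K t : ℝ} (hη : 1 < η)
    (hF : Continuous F) (hG : Continuous G) (hK : 0 ≤ K)
    (hFG : ∀ s ∈ Icc 0 1, |F s - G s| ≤ K) (ht : t ∈ Icc 0 1) :
    |fractionalBVPOperator η F t - fractionalBVPOperator η G t|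
      ≤ 3 * K / Real.Gamma (η + 1) := by
  have hη0 : 0 < η := by linarith
  have hΓ : 0 < Real.Gamma η := Real.Gamma_pos_of_pos hη0
  have hbound : ∀ s ∈ Icc (0:ℝ) 1, |rlIntegral η (F - G) s| ≤ K / η :=
    fun s hs => abs_rlIntegral_le_div hη0 hK hFG hs
  have hlocal : |rlIntegral η (F - G) t| ≤ K / η := hbound t ht
  have hglobal : |∫ s in (0:ℝ)..1, rlIntegral η (F - G) s| ≤ K / η := by
    simpa using intervalIntegral.norm_integral_le_of_norm_le_const
      (f := rlIntegral η (F - G)) fun s hs =>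
        hbound s (Ioc_subset_Icc_self ((uIoc_of_le (zero_le_one (α := ℝ))) ▸ hs))
  have hsplit : fractionalBVPOperator η F t - fractionalBVPOperator η G t
      = 1 / Real.Gamma η * rlIntegral η (F - G) t
        + 2 * t / Real.Gamma η * ∫ s in (0:ℝ)..1, rlIntegral η (F - G) s := by
    rw [← rlIntegral_sub hη0 hF hG, ← integral_rlIntegral_sub hη hF hG,
      fractionalBVPOperator, fractionalBVPOperator]
    ring
  have ht0 : 0 ≤ 2 * t / Real.Gamma η := div_nonneg (by linarith [ht.1]) hΓ.le
  rw [hsplit, Real.Gamma_add_one hη0.ne']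
  calc _ ≤ 1 / Real.Gamma η * |rlIntegral η (F - G) t|
        + 2 * t / Real.Gamma η * |∫ s in (0:ℝ)..1, rlIntegral η (F - G) s| := by
          refine (abs_add_le _ _).trans_eq ?_
          rw [abs_mul, abs_mul, abs_of_nonneg (by positivity), abs_of_nonneg ht0]
    _ ≤ 1 / Real.Gamma η * (K / η) + 2 * t / Real.Gamma η * (K / η) := by gcongr
    _ = (1 + 2 * t) * K / (η * Real.Gamma η) := by field_simp
    _ ≤ 3 * K / (η * Real.Gamma η) := by gcongr; linarith [ht.2]

end RiemannLiouville

lemma abs_sub_comp_IccExtend_le {g : ℝ → ℝ → ℝ} {L : ℝ} (hL : 0 ≤ L)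
    (hlip : ∀ t x₁ x₂ : ℝ, |g t x₁ - g t x₂| ≤ L * |x₁ - x₂|) (Ξ χ : XC) (q : ℝ) :
    |g q (IccExtend zero_le_one Ξ q) - g q (IccExtend zero_le_one χ q)| ≤ L * dist Ξ χ :=
  (hlip q _ _).trans (mul_le_mul_of_nonneg_left
    (ContinuousMap.dist_apply_le_dist (f := Ξ) (g := χ) (projIcc 0 1 zero_le_one q)) hL)

/-- Let `1 < η ≤ 2` and `g : [0,1] × ℝ → ℝ` be continuous with
`|g(t,x₁) − g(t,x₂)| ≤ r·(Γ(η+1)/4)·|x₁ − x₂|` for some `r ∈ [0,1)`. Let `H` be the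
fractional integral operator
`H(Ξ)(t) = (1/Γ(η))∫₀ᵗ (t−s)^{η−1} g(s,Ξ(s)) ds
  + (2t/Γ(η))∫₀¹ ∫₀ˢ (s−q)^{η−1} g(q,Ξ(q)) dq ds`.
Then `d_∞(HΞ, Hχ) ≤ r·d_∞(Ξ, χ)`, equivalently `P(HΞ,Hχ,l) ≤ r·P(Ξ,χ,l)` for all
`l > 0` where `P(φ,ϕ,q) = d_∞(φ,ϕ)/q`, and `H` has a unique fixed point. -/
theorem stmt19 (η r : ℝ) (hη1 : 1 < η) (hr0 : 0 ≤ r) (hr1 : r < 1)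
    (g : ℝ → ℝ → ℝ) (hg : Continuous fun p : ℝ × ℝ => g p.1 p.2)
    (hlip : ∀ t x₁ x₂ : ℝ, |g t x₁ - g t x₂| ≤ r * (Real.Gamma (η + 1) / 4) * |x₁ - x₂|)
    (H : XC → XC)
    (hH : ∀ (Ξ : XC) (t : Set.Icc (0:ℝ) 1),
      H Ξ t =
        (1 / Real.Gamma η) *
          (∫ s in (0:ℝ)..(t:ℝ),
            ((t:ℝ) - s) ^ (η - 1) * g s (Set.IccExtend (by norm_num : (0:ℝ) ≤ 1) Ξ s)) +
        (2 * (t:ℝ) / Real.Gamma η) *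
          (∫ s in (0:ℝ)..1, ∫ q in (0:ℝ)..s,
            (s - q) ^ (η - 1) * g q (Set.IccExtend (by norm_num : (0:ℝ) ≤ 1) Ξ q))) :
    (∀ Ξ χ : XC, dist (H Ξ) (H χ) ≤ r * dist Ξ χ) ∧
    (∀ Ξ χ : XC, ∀ l > (0:ℝ), dist (H Ξ) (H χ) / l ≤ r * (dist Ξ χ / l)) ∧
    (∃! Ξ : XC, H Ξ = Ξ) := by
  have hΓ : 0 < Real.Gamma (η + 1) := Real.Gamma_pos_of_pos (by linarith)
  have hcont (Ξ : XC) : Continuous fun q => g q (IccExtend zero_le_one Ξ q) :=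
    hg.comp (continuous_id.prodMk Ξ.continuous.Icc_extend')
  have hcontract (Ξ χ : XC) : dist (H Ξ) (H χ) ≤ r * dist Ξ χ := by
    refine (ContinuousMap.dist_le (by positivity)).2 fun t => ?_
    rw [Real.dist_eq, hH, hH]
    calc _ ≤ 3 * (r * (Real.Gamma (η + 1) / 4) * dist Ξ χ) / Real.Gamma (η + 1) :=
          abs_fractionalBVPOperator_sub_le hη1 (hcont Ξ) (hcont χ) (by positivity)
            (fun q _ => abs_sub_comp_IccExtend_le (by positivity) hlip Ξ χ q) t.2
      _ = 3 / 4 * (r * dist Ξ χ) := by field_simp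
      _ ≤ r * dist Ξ χ := by linarith [mul_nonneg hr0 (dist_nonneg (x := Ξ) (y := χ))]
  have hH_contracting : ContractingWith ⟨r, hr0⟩ H :=
    ⟨hr1, LipschitzWith.of_dist_le_mul hcontract⟩
  refine ⟨hcontract, fun Ξ χ l hl => ?_, ?_⟩
  · rw [mul_div_assoc']
    exact div_le_div_of_nonneg_right (hcontract Ξ χ) hl.le
  · have : Nonempty XC := ⟨0⟩
    exact ⟨hH_contracting.fixedPoint H, hH_contracting.fixedPoint_isFixedPt,
      fun _ hΞ => hH_contracting.fixedPoint_unique hΞ⟩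
end
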